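/- Let 𝔊₉ be the 7-dimensional real Lie algebra with basis (X₁,X₂,X₃,X₄,X₅,X,Y) and nonzero brackets [X₁,X₂]=X₄, [X₁,X₃]=X₅, [X,X₃]=X₃, [X,X₅]=X₅, [Y,X₂]=X₂, [Y,X₄]=X₄, [Y,X₃]=X₅. For F ∈ 𝔊₉* with coordinates (α₁,α₂,α₃,α₄,α₅,α,β) in the dual basis, let B_F be the skew-symmetric bilinear form on 𝔊₉ defined by B_F(A,B) = ⟨F,[A,B]⟩. Then the rank of B_F equals 6 if and only if either (α₄ = 0 and α₂α₅ ≠ 0) or (α₄ ≠ 0 and (α₃ ≠ 0 or α₅ ≠ 0)); in particular the maximal possible rank of B_F over all F is 6. -/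

import Mathlib

/-!
The Gram matrix is skew-symmetric of odd size, so its determinant vanishes and the rank is at
most 6. Only `α₂, …, α₅` enter it. When the condition holds, one of the principal `6 × 6` minors
obtained by deleting `X₄`, `X₅` or `X₂` is the nonzero monomial `α₂²α₅⁴`, `α₃²α₄⁴` or `α₄²α₅⁴`;
when it fails, two rows of the Gram matrix vanish, so the rank is at most 5.
-/

noncomputable section

/-- Half of the structure constants of the Lie algebra 𝔊₉: `g9half i j` is the
coordinate vector of `[Xᵢ, Xⱼ]` for the ordered pairs `(i,j)` listed in the paper
(indices `0,…,4` are `X₁,…,X₅`, index `5` is `X`, index `6` is `Y`). -/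
def g9half (i j : Fin 7) : Fin 7 → ℝ :=
  if i = 0 ∧ j = 1 then Pi.single 3 1      -- [X₁,X₂] = X₄
  else if i = 0 ∧ j = 2 then Pi.single 4 1 -- [X₁,X₃] = X₅
  else if i = 5 ∧ j = 2 then Pi.single 2 1 -- [X,X₃] = X₃
  else if i = 5 ∧ j = 4 then Pi.single 4 1 -- [X,X₅] = X₅
  else if i = 6 ∧ j = 1 then Pi.single 1 1 -- [Y,X₂] = X₂
  else if i = 6 ∧ j = 3 then Pi.single 3 1 -- [Y,X₄] = X₄
  else if i = 6 ∧ j = 2 then Pi.single 4 1 -- [Y,X₃] = X₅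
  else 0

/-- The bracket `[Xᵢ, Xⱼ]` (in coordinates) of basis vectors of 𝔊₉. -/
def g9br (i j : Fin 7) : Fin 7 → ℝ := g9half i j - g9half j i

/-- The Gram matrix of the bilinear form `B_F(A,B) = ⟨F,[A,B]⟩` in the given basis,
where `α` is the coordinate vector of `F` in the dual basis. -/
def gramG9 (α : Fin 7 → ℝ) : Matrix (Fin 7) (Fin 7) ℝ :=
  Matrix.of fun i j => ∑ k, α k * g9br i j k

open Matrix

namespace Matrix

variable {K m n : Type*} [Field K]

theorem det_eq_zero_of_transpose_eq_neg [Fintype n] [DecidableEq n] [NeZero (2 : K)]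
    {A : Matrix n n K} (hA : Aᵀ = -A) (hn : Odd (Fintype.card n)) : A.det = 0 := by
  have h : A.det = -A.det :=
    calc A.det = (-A).det := by rw [← hA, det_transpose]
      _ = -A.det := by rw [det_neg, hn.neg_one_pow, neg_one_mul]
  have h2 : (2 : K) * A.det = 0 := by linear_combination h
  exact (mul_eq_zero.mp h2).resolve_left two_ne_zero

theorem rank_lt_card_of_det_eq_zero [Fintype n] [DecidableEq n] {A : Matrix n n K}
    (hA : A.det = 0) : A.rank < Fintype.card n := by
  refine (rank_le_card_width A).lt_of_ne fun hrank => ?_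
  have hsurj : Function.Surjective A.mulVec := by
    have htop : LinearMap.range A.mulVecLin = ⊤ :=
      Submodule.eq_top_of_finrank_eq (by rwa [Module.finrank_fintype_fun_eq_card])
    exact LinearMap.range_eq_top.mp htop
  exact (isUnit_iff_isUnit_det A).mp (mulVec_surjective_iff_isUnit.mp hsurj) |>.ne_zero hA

theorem rank_le_card_sub_two_of_row_eq_zero [Fintype m] [Fintype n] [DecidableEq m]
    (A : Matrix m n K) {i j : m} (hij : i ≠ j) (hi : A i = 0) (hj : A j = 0) :
    A.rank ≤ Fintype.card m - 2 := by
  calc A.rank ≤ (Finset.univ \ {i, j}).card := by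
        refine rank_le_card_of_support_subset A _ fun k hk => ?_
        have hk' : k ≠ i ∧ k ≠ j := ⟨fun h => hk (h ▸ hi), fun h => hk (h ▸ hj)⟩
        simpa using hk'
    _ = Fintype.card m - 2 := by
        rw [Finset.card_sdiff_of_subset (Finset.subset_univ _), Finset.card_univ,
          Finset.card_pair hij]

theorem card_le_rank_of_det_submatrix_ne_zero {l : Type*} [Fintype n] [Fintype l]
    [DecidableEq l] (A : Matrix m n K) (r : l → m) (c : l → n)
    (h : (A.submatrix r c).det ≠ 0) :
    Fintype.card l ≤ A.rank :=
  (rank_of_det_ne_zero h).symm.le.trans (rank_submatrix_le A r c)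

end Matrix

theorem g9br_swap (i j : Fin 7) : g9br j i = -g9br i j := by
  simp only [g9br, neg_sub]

theorem gramG9_transpose (α : Fin 7 → ℝ) : (gramG9 α)ᵀ = -gramG9 α := by
  ext i j
  simp [gramG9, g9br_swap j i]

theorem gramG9_eq (α : Fin 7 → ℝ) : gramG9 α =
    !![0, α 3, α 4, 0, 0, 0, 0;
      -α 3, 0, 0, 0, 0, 0, -α 1;
      -α 4, 0, 0, 0, 0, -α 2, -α 4;
      0, 0, 0, 0, 0, 0, -α 3;
      0, 0, 0, 0, 0, -α 4, 0;
      0, 0, α 2, 0, α 4, 0, 0;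
      0, α 1, α 4, α 3, 0, 0, 0] := by
  ext i j
  fin_cases i <;> fin_cases j <;> simp [gramG9, g9br, g9half, Fin.sum_univ_seven]

theorem rank_gramG9_le_six (α : Fin 7 → ℝ) : (gramG9 α).rank ≤ 6 := by
  have hdet := det_eq_zero_of_transpose_eq_neg (gramG9_transpose α) (by decide)
  simpa [Nat.lt_succ_iff] using rank_lt_card_of_det_eq_zero hdet

theorem det_gramG9_submatrix_succAbove_three (α : Fin 7 → ℝ) (h3 : α 3 = 0) :
    ((gramG9 α).submatrix (Fin.succAbove 3) (Fin.succAbove 3)).det = α 1 ^ 2 * α 4 ^ 4 := by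
  have hminor : (gramG9 α).submatrix (Fin.succAbove 3) (Fin.succAbove 3) =
      !![0, α 3, α 4, 0, 0, 0;
        -α 3, 0, 0, 0, 0, -α 1;
        -α 4, 0, 0, 0, -α 2, -α 4;
        0, 0, 0, 0, -α 4, 0;
        0, 0, α 2, α 4, 0, 0;
        0, α 1, α 4, 0, 0, 0] := by
    rw [gramG9_eq]
    ext i j
    fin_cases i <;> fin_cases j <;> rfl
  rw [hminor, h3]
  simp [det_succ_row_zero, Fin.sum_univ_succ, Fin.succAbove]
  ring

theorem det_gramG9_submatrix_succAbove_four (α : Fin 7 → ℝ) :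
    ((gramG9 α).submatrix (Fin.succAbove 4) (Fin.succAbove 4)).det = α 2 ^ 2 * α 3 ^ 4 := by
  have hminor : (gramG9 α).submatrix (Fin.succAbove 4) (Fin.succAbove 4) =
      !![0, α 3, α 4, 0, 0, 0;
        -α 3, 0, 0, 0, 0, -α 1;
        -α 4, 0, 0, 0, -α 2, -α 4;
        0, 0, 0, 0, 0, -α 3;
        0, 0, α 2, 0, 0, 0;
        0, α 1, α 4, α 3, 0, 0] := by
    rw [gramG9_eq]
    ext i j
    fin_cases i <;> fin_cases j <;> rfl
  rw [hminor]
  simp [det_succ_row_zero, Fin.sum_univ_succ, Fin.succAbove]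
  ring

theorem det_gramG9_submatrix_succAbove_one (α : Fin 7 → ℝ) :
    ((gramG9 α).submatrix (Fin.succAbove 1) (Fin.succAbove 1)).det = α 3 ^ 2 * α 4 ^ 4 := by
  have hminor : (gramG9 α).submatrix (Fin.succAbove 1) (Fin.succAbove 1) =
      !![0, α 4, 0, 0, 0, 0;
        -α 4, 0, 0, 0, -α 2, -α 4;
        0, 0, 0, 0, 0, -α 3;
        0, 0, 0, 0, -α 4, 0;
        0, α 2, 0, α 4, 0, 0;
        0, α 4, α 3, 0, 0, 0] := by
    rw [gramG9_eq]
    ext i j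
    fin_cases i <;> fin_cases j <;> rfl
  rw [hminor]
  simp [det_succ_row_zero, Fin.sum_univ_succ, Fin.succAbove]
  ring

theorem six_le_rank_gramG9 (α : Fin 7 → ℝ)
    (h : (α 3 = 0 ∧ α 1 * α 4 ≠ 0) ∨ (α 3 ≠ 0 ∧ (α 2 ≠ 0 ∨ α 4 ≠ 0))) :
    6 ≤ (gramG9 α).rank := by
  have of_minor (k : Fin 7) (hk : ((gramG9 α).submatrix k.succAbove k.succAbove).det ≠ 0) :
      6 ≤ (gramG9 α).rank := by
    simpa using card_le_rank_of_det_submatrix_ne_zero _ _ _ hk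
  rcases h with ⟨h3, h14⟩ | ⟨h3, h2 | h4⟩
  · refine of_minor 3 ?_
    rw [det_gramG9_submatrix_succAbove_three α h3]
    simpa using h14
  · refine of_minor 4 ?_
    rw [det_gramG9_submatrix_succAbove_four]
    simp [h2, h3]
  · refine of_minor 1 ?_
    rw [det_gramG9_submatrix_succAbove_one]
    simp [h3, h4]

theorem rank_gramG9_le_five (α : Fin 7 → ℝ)
    (h : ¬((α 3 = 0 ∧ α 1 * α 4 ≠ 0) ∨ (α 3 ≠ 0 ∧ (α 2 ≠ 0 ∨ α 4 ≠ 0)))) :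
    (gramG9 α).rank ≤ 5 := by
  have of_rows {i j : Fin 7} (hij : i ≠ j) (hi : gramG9 α i = 0) (hj : gramG9 α j = 0) :
      (gramG9 α).rank ≤ 5 := by
    simpa using rank_le_card_sub_two_of_row_eq_zero _ hij hi hj
  push Not at h
  obtain ⟨hzero, hnonzero⟩ := h
  by_cases h3 : α 3 = 0
  · rcases mul_eq_zero.mp (hzero h3) with h1 | h4
    · refine of_rows (i := 1) (j := 3) (by decide) ?_ ?_ <;>
        ext k <;> fin_cases k <;> simp [gramG9_eq, h1, h3]
    · refine of_rows (i := 3) (j := 4) (by decide) ?_ ?_ <;>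
        ext k <;> fin_cases k <;> simp [gramG9_eq, h3, h4]
  · obtain ⟨h2, h4⟩ := hnonzero h3
    refine of_rows (i := 2) (j := 4) (by decide) ?_ ?_ <;>
      ext k <;> fin_cases k <;> simp [gramG9_eq, h2, h4]

/-- For `F ∈ 𝔊₉*` with coordinates `(α₁,…,α₅,α,β)`, the rank of `B_F` is `6`
iff either (`α₄ = 0` and `α₂α₅ ≠ 0`) or (`α₄ ≠ 0` and (`α₃ ≠ 0` or `α₅ ≠ 0`));
in particular the maximal rank is `6`. -/
theorem rank_BF_G9 :
    (∀ α : Fin 7 → ℝ, (gramG9 α).rank ≤ 6) ∧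
    (∀ α : Fin 7 → ℝ,
      (gramG9 α).rank = 6 ↔
        ((α 3 = 0 ∧ α 1 * α 4 ≠ 0) ∨ (α 3 ≠ 0 ∧ (α 2 ≠ 0 ∨ α 4 ≠ 0)))) := by
  refine ⟨rank_gramG9_le_six, fun α => ⟨fun h6 => ?_, fun h => ?_⟩⟩
  · by_contra h
    have := rank_gramG9_le_five α h
    omega
  · exact (rank_gramG9_le_six α).antisymm (six_le_rank_gramG9 α h)

end
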